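/- Let u, v be associative Lyndon-Shirshov words with u = avb. Define the relative bracketing [u]_v from [u] = [a[vc]d] by replacing [vc] with [[[v][c₁]]⋯[c_k]], where c = c₁⋯c_k is the non-decreasing Lyndon factorization of c. Then, viewed in k⟨X⟩, the leading word of [u]_v is u, and [u]_v = a[v]b + Σᵢ αᵢ aᵢ[v]bᵢ where each aᵢ v bᵢ < a v b = u in the deg-lex order. -/

import Mathlib

open List

/-- The lexicographic order used by Shirshov: a word is *greater* than any of its
proper extensions (`w > w ++ t` for `t ≠ []`), and otherwise words are compared
letterwise by the order on the alphabet.  `LSLt u v` means `u < v`. -/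
def LSLt {X : Type*} [LinearOrder X] : List X → List X → Prop
  | _ :: _, [] => True
  | [], _ => False
  | a :: u, b :: v => a < b ∨ (a = b ∧ LSLt u v)

/-- `u ≤ v` in the Shirshov lexicographic order. -/
def LSLe {X : Type*} [LinearOrder X] (u v : List X) : Prop := u = v ∨ LSLt u v

/-- The degree-lexicographic order: compare first by length, then lexicographically. -/
def DegLt {X : Type*} [LinearOrder X] (u v : List X) : Prop :=
  u.length < v.length ∨ (u.length = v.length ∧ LSLt u v)

/-- `≤` in the degree-lexicographic order. -/
def DegLe {X : Type*} [LinearOrder X] (u v : List X) : Prop := u = v ∨ DegLt u v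

/-- An associative Lyndon–Shirshov word: a nonempty word `u` such that `vw > wv`
(lexicographically) for every factorization `u = vw` into nonempty parts. -/
def IsALSW {X : Type*} [LinearOrder X] (u : List X) : Prop :=
  u ≠ [] ∧ ∀ v w : List X, v ≠ [] → w ≠ [] → u = v ++ w → LSLt (w ++ v) (v ++ w)

/-- The underlying associative word of a non-associative word (binary bracketing). -/
def wordOf {X : Type*} : FreeMagma X → List X
  | .of x => [x]
  | .mul a b => wordOf a ++ wordOf b

/-- `w` is the longest proper suffix of `u` which is an ALSW. -/
def LongestALSWProperSuffix {X : Type*} [LinearOrder X] (u w : List X) : Prop :=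
  IsALSW w ∧ (∃ v : List X, v ≠ [] ∧ u = v ++ w) ∧
    ∀ w' : List X, IsALSW w' → (∃ v' : List X, v' ≠ [] ∧ u = v' ++ w') →
      w'.length ≤ w.length

/-- The standard (up-to-down) bracketing of an ALSW: `[x] = x` and
`[u] = [[v][w]]` where `w` is the longest proper ALSW suffix of `u`. -/
inductive IsStdBracketing {X : Type*} [LinearOrder X] : List X → FreeMagma X → Prop
  | of (x : X) : IsStdBracketing [x] (.of x)
  | mul {v w : List X} {tv tw : FreeMagma X} :
      IsALSW (v ++ w) → LongestALSWProperSuffix (v ++ w) w →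
      IsStdBracketing v tv → IsStdBracketing w tw →
      IsStdBracketing (v ++ w) (tv * tw)

/-- A non-associative Lyndon–Shirshov word, via Shirshov's conditions:
the underlying word is an ALSW, both halves are NLSWs, and the right factor of
the left half is `≤` the right half. -/
inductive IsNLSW {X : Type*} [LinearOrder X] : FreeMagma X → Prop
  | of (x : X) : IsNLSW (.of x)
  | mul {tv tw : FreeMagma X} :
      IsNLSW tv → IsNLSW tw → IsALSW (wordOf (tv * tw)) →
      (∀ t₁ t₂ : FreeMagma X, tv = t₁ * t₂ → LSLe (wordOf t₂) (wordOf tw)) →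
      IsNLSW (tv * tw)

/-- The free associative algebra `k⟨X⟩`, realized as the monoid algebra of the
free monoid on `X`. -/
abbrev FreeAssocAlg (k X : Type*) [Field k] := MonoidAlgebra k (FreeMonoid X)

/-- The monomial of `k⟨X⟩` corresponding to a word `u ∈ X*`. -/
noncomputable def monom (k : Type*) [Field k] {X : Type*} (u : List X) : FreeAssocAlg k X :=
  MonoidAlgebra.single (FreeMonoid.ofList u) 1

/-- The coefficient of the word `u` in `f ∈ k⟨X⟩`. -/
def coeffW {k X : Type*} [Field k] (f : FreeAssocAlg k X) (u : List X) : k :=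
  f.coeff (FreeMonoid.ofList u)

/-- `u` is the leading word of `f` with respect to the deg-lex order. -/
def IsLeadingWord {k X : Type*} [Field k] [LinearOrder X]
    (f : FreeAssocAlg k X) (u : List X) : Prop :=
  coeffW f u ≠ 0 ∧ ∀ w : List X, coeffW f w ≠ 0 → w = u ∨ DegLt w u

/-- `f` is monic: its leading coefficient is `1`. -/
def IsMonic {k X : Type*} [Field k] [LinearOrder X] (f : FreeAssocAlg k X) : Prop :=
  ∃ u : List X, IsLeadingWord f u ∧ coeffW f u = 1

/-- The generator `x ∈ X` inside `k⟨X⟩`. -/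
noncomputable def gen (k : Type*) [Field k] {X : Type*} (x : X) : FreeAssocAlg k X :=
  monom k [x]

attribute [local instance 100] LieRing.ofAssociativeRing

/-- The free Lie algebra `Lie(X)`: the Lie subalgebra of `k⟨X⟩` generated by `X`
under the commutator bracket. -/
noncomputable def LieX (k X : Type*) [Field k] : LieSubalgebra k (FreeAssocAlg k X) :=
  LieSubalgebra.lieSpan k _ (Set.range (gen k (X := X)))

/-- Evaluation of a non-associative word in `k⟨X⟩`, interpreting the binary
operation as the commutator `(ab) = ab - ba`. -/
noncomputable def evalC {k X : Type*} [Field k] : FreeMagma X → FreeAssocAlg k X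
  | .of x => gen k x
  | .mul a b => evalC a * evalC b - evalC b * evalC a

/-- `SubtreeAt s a d t`: `s` occurs as a (bracketed) subtree of `t`, with the word
`a` to its left and the word `d` to its right. -/
inductive SubtreeAt {X : Type*} : FreeMagma X → List X → List X → FreeMagma X → Prop
  | refl (t : FreeMagma X) : SubtreeAt t [] [] t
  | left {s : FreeMagma X} {a d : List X} {t₁ : FreeMagma X} (t₂ : FreeMagma X) :
      SubtreeAt s a d t₁ → SubtreeAt s a (d ++ wordOf t₂) (t₁ * t₂)
  | right {s : FreeMagma X} {a d : List X} {t₂ : FreeMagma X} (t₁ : FreeMagma X) :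
      SubtreeAt s a d t₂ → SubtreeAt s (wordOf t₁ ++ a) d (t₁ * t₂)

/-- `ReplaceAt s s' a d t t'`: `t'` is obtained from `t` by replacing the subtree
`s`, occurring at position `(a, d)`, by `s'`. -/
inductive ReplaceAt {X : Type*} (s s' : FreeMagma X) :
    List X → List X → FreeMagma X → FreeMagma X → Prop
  | refl : ReplaceAt s s' [] [] s s'
  | left {a d : List X} {t₁ t₁' : FreeMagma X} (t₂ : FreeMagma X) :
      ReplaceAt s s' a d t₁ t₁' → ReplaceAt s s' a (d ++ wordOf t₂) (t₁ * t₂) (t₁' * t₂)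
  | right {a d : List X} {t₂ t₂' : FreeMagma X} (t₁ : FreeMagma X) :
      ReplaceAt s s' a d t₂ t₂' →
      ReplaceAt s s' (wordOf t₁ ++ a) d (t₁ * t₂) (t₁ * t₂')

/-- The left-normed product `[[[t₀ t₁] t₂] ⋯ tₙ]`. -/
def leftComb {X : Type*} (t₀ : FreeMagma X) (ts : List (FreeMagma X)) : FreeMagma X :=
  ts.foldl (· * ·) t₀

/-- `cs` is the non-decreasing Lyndon factorization of `c`. -/
def LyndonFactorization {X : Type*} [LinearOrder X] (c : List X) (cs : List (List X)) : Prop :=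
  c = cs.flatten ∧ (∀ w ∈ cs, IsALSW w) ∧ cs.Chain' LSLe

/-- `EvalSub k f s a d t h`: evaluating the bracketing `t` in `k⟨X⟩` (via
commutators), except that its subtree `s` at position `(a, d)` is replaced by the
polynomial `f`, gives the value `h`. -/
inductive EvalSub (k : Type*) [Field k] {X : Type*} [LinearOrder X] (f : FreeAssocAlg k X) :
    FreeMagma X → List X → List X → FreeMagma X → FreeAssocAlg k X → Prop
  | refl (s : FreeMagma X) : EvalSub k f s [] [] s f
  | left {s : FreeMagma X} {a d : List X} {t₁ : FreeMagma X} {h : FreeAssocAlg k X}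
      (t₂ : FreeMagma X) : EvalSub k f s a d t₁ h →
      EvalSub k f s a (d ++ wordOf t₂) (t₁ * t₂) (h * evalC t₂ - evalC t₂ * h)
  | right {s : FreeMagma X} {a d : List X} {t₂ : FreeMagma X} {h : FreeAssocAlg k X}
      (t₁ : FreeMagma X) : EvalSub k f s a d t₂ h →
      EvalSub k f s (wordOf t₁ ++ a) d (t₁ * t₂) (evalC t₁ * h - h * evalC t₁)

/-- `IsNormalSWord f fbar a b h`: `h` is the normal `S`-word `[afb]_{f̄}`, i.e. the
result of taking the relative (Shirshov special) bracketing `[a f̄ b]_{f̄}` and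
substituting the polynomial `f` for the subtree `[f̄]`. -/
def IsNormalSWord {k X : Type*} [Field k] [LinearOrder X]
    (f : FreeAssocAlg k X) (fbar a b : List X) (h : FreeAssocAlg k X) : Prop :=
  ∃ (c d : List X) (t s tv t' : FreeMagma X) (cs : List (List X)) (tcs : List (FreeMagma X)),
    b = c ++ d ∧
    IsStdBracketing (a ++ fbar ++ b) t ∧
    SubtreeAt s a d t ∧ wordOf s = fbar ++ c ∧
    IsStdBracketing fbar tv ∧
    LyndonFactorization c cs ∧
    List.Forall₂ IsStdBracketing cs tcs ∧
    ReplaceAt s (leftComb tv tcs) a d t t' ∧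
    EvalSub k f tv a (c ++ d) t' h

/-!
Write `T = [v]`. Each bracket of `[u]_v` above `[v]` is a commutator of some
`A = a T b + Σ αᵢ aᵢ T bᵢ` (all `aᵢvbᵢ < avb`) with a standard bracketing `B = [w]`, and
`B = w + (smaller words)` by Shirshov's leading-term theorem. All the words occurring are
homogeneous, and comparisons between words of equal length survive concatenation, so
`AB - BA = a T (bw) + Σ …` as soon as `w·avb < avb·w` (and symmetrically for `BA - AB`).

For the brackets of `[u]` enclosing `[vc]` this inequality is the ALSW property of the bracketed
subword. For the factors of `[[[v][c₁]]⋯[c_k]]` it reads `c_j ≺ vc₁⋯c_{j-1}` for the cyclic order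
`x ≺ y :⇔ xy < yx`: since `vc` is an ALSW, `c_j⋯c_k ≺ vc₁⋯c_{j-1}`, while `c_j ≼ c_j⋯c_k` because
`c_j ≤ c_{j+1} ≤ ⋯`. The cyclic order is transitive on nonempty words, as `x ≺ y` is equivalent
to `x^m < y^n` whenever `|x^m| = |y^n|`.
-/

section ShirshovOrder

variable {X : Type*} [LinearOrder X] {u v w s t : List X}

@[simp] theorem not_lslt_nil : ¬ LSLt [] u := by cases u <;> simp [LSLt]

@[simp] theorem lslt_cons_nil {a : X} : LSLt (a :: u) [] := by simp [LSLt]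

@[simp] theorem lslt_cons_cons {a b : X} :
    LSLt (a :: u) (b :: v) ↔ a < b ∨ (a = b ∧ LSLt u v) := by simp [LSLt]

theorem lslt_irrefl : ∀ u : List X, ¬ LSLt u u
  | [] => not_lslt_nil
  | a :: u => by simpa using lslt_irrefl u

theorem lslt_trans : ∀ {u v w : List X}, LSLt u v → LSLt v w → LSLt u w
  | _ :: _, _ :: _, [], _, _ => lslt_cons_nil
  | [], _, _, h, _ => absurd h not_lslt_nil
  | _ :: _, [], _, _, h => absurd h not_lslt_nil
  | a :: u, b :: v, c :: w, h₁, h₂ => by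
    simp only [lslt_cons_cons] at *
    rcases h₁ with h₁ | ⟨rfl, h₁⟩ <;> rcases h₂ with h₂ | ⟨rfl, h₂⟩
    exacts [Or.inl (h₁.trans h₂), Or.inl h₁, Or.inl h₂,
      Or.inr ⟨rfl, lslt_trans h₁ h₂⟩]

theorem lslt_trichotomy_of_length_eq :
    ∀ {u v : List X}, u.length = v.length → LSLt u v ∨ u = v ∨ LSLt v u
  | [], [], _ => Or.inr (Or.inl rfl)
  | a :: u, b :: v, hl => by
    simp only [lslt_cons_cons, cons.injEq]
    rcases lt_trichotomy a b with hab | rfl | hab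
    · exact Or.inl (Or.inl hab)
    · rcases lslt_trichotomy_of_length_eq (u := u) (v := v) (by simpa using hl)
        with h | h | h <;> simp [h]
    · exact Or.inr (Or.inr (Or.inl hab))

theorem lslt_append_left_iff : ∀ (w : List X), LSLt (w ++ u) (w ++ v) ↔ LSLt u v
  | [] => Iff.rfl
  | a :: w => by simp [lslt_append_left_iff w]

theorem lslt_cases : ∀ {u v : List X}, LSLt u v →
    (∃ t, t ≠ [] ∧ u = v ++ t) ∨ ∀ s t, LSLt (u ++ s) (v ++ t)
  | a :: u, [], _ => Or.inl ⟨a :: u, by simp, rfl⟩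
  | [], _, h => absurd h not_lslt_nil
  | a :: u, b :: v, h => by
    rcases lslt_cons_cons.1 h with hab | ⟨rfl, htail⟩
    · exact Or.inr fun s t => by simp [hab]
    · rcases lslt_cases htail with ⟨t, ht, rfl⟩ | hext
      · exact Or.inl ⟨t, ht, by simp⟩
      · exact Or.inr fun s t => by simp [hext s t]

theorem lslt_append_of_length_eq (hl : u.length = v.length) (h : LSLt u v) (s t : List X) :
    LSLt (u ++ s) (v ++ t) := by
  rcases lslt_cases h with ⟨r, hr, rfl⟩ | h
  · simp_all
  · exact h s t

theorem lsle_refl (u : List X) : LSLe u u := Or.inl rfl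

theorem LSLt.lsle (h : LSLt u v) : LSLe u v := Or.inr h

theorem lslt_of_lsle_of_lslt (h₁ : LSLe u v) (h₂ : LSLt v w) : LSLt u w := by
  rcases h₁ with rfl | h₁
  exacts [h₂, lslt_trans h₁ h₂]

theorem lslt_of_lslt_of_lsle (h₁ : LSLt u v) (h₂ : LSLe v w) : LSLt u w := by
  rcases h₂ with rfl | h₂
  exacts [h₁, lslt_trans h₁ h₂]

theorem lsle_trans (h₁ : LSLe u v) (h₂ : LSLe v w) : LSLe u w := by
  rcases h₁ with rfl | h₁
  exacts [h₂, (lslt_of_lslt_of_lsle h₁ h₂).lsle]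

theorem lsle_append (hl : u.length = v.length) (h₁ : LSLe u v) (h₂ : LSLe s t) :
    LSLe (u ++ s) (v ++ t) := by
  rcases h₁ with rfl | h₁
  · rcases h₂ with rfl | h₂
    exacts [lsle_refl _, ((lslt_append_left_iff u).2 h₂).lsle]
  · exact (lslt_append_of_length_eq hl h₁ s t).lsle

theorem lslt_append_of_lsle_of_lslt (hl : u.length = v.length) (h₁ : LSLe u v)
    (h₂ : LSLt s t) : LSLt (u ++ s) (v ++ t) := by
  rcases h₁ with rfl | h₁
  exacts [(lslt_append_left_iff u).2 h₂, lslt_append_of_length_eq hl h₁ s t]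

theorem lsle_of_lsle_append (hl : u.length = v.length) (h : LSLe (u ++ s) (v ++ t)) :
    LSLe u v := by
  rcases lslt_trichotomy_of_length_eq hl with h' | rfl | h'
  exacts [h'.lsle, lsle_refl u, absurd h fun h =>
    lslt_irrefl _ (lslt_of_lslt_of_lsle (lslt_append_of_length_eq hl.symm h' t s) h)]

end ShirshovOrder

section CyclicOrder

variable {X : Type*} [LinearOrder X] {v x y z x' y' p q : List X}

def CycLT (x y : List X) : Prop := LSLt (x ++ y) (y ++ x)

def CycLE (x y : List X) : Prop := LSLe (x ++ y) (y ++ x)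

theorem CycLT.cycLE (h : CycLT x y) : CycLE x y := Or.inr h

theorem IsALSW.cycLT (h : IsALSW (x ++ y)) (hx : x ≠ []) (hy : y ≠ []) : CycLT y x :=
  h.2 x y hx hy rfl

theorem cycLE_nil_right (x : List X) : CycLE x [] := by simp [CycLE, lsle_refl]

theorem cycLE_nil_left (y : List X) : CycLE [] y := by simp [CycLE, lsle_refl]

theorem cycLE_append_right (h : CycLE x y) (h' : CycLE x y') : CycLE x (y ++ y') := by
  have h₁ : LSLe (x ++ y ++ y') (y ++ x ++ y') :=
    lsle_append (by simp [Nat.add_comm]) h (lsle_refl _)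
  have h₂ : LSLe (y ++ (x ++ y')) (y ++ (y' ++ x)) := lsle_append rfl (lsle_refl _) h'
  simpa [CycLE] using lsle_trans h₁ (by simpa using h₂)

theorem cycLT_append_right (h : CycLT x y) (h' : CycLE x y') : CycLT x (y ++ y') := by
  have h₁ : LSLt (x ++ y ++ y') (y ++ x ++ y') :=
    lslt_append_of_length_eq (by simp [Nat.add_comm]) h _ _
  have h₂ : LSLe (y ++ (x ++ y')) (y ++ (y' ++ x)) := lsle_append rfl (lsle_refl _) h'
  simpa [CycLT] using lslt_of_lslt_of_lsle h₁ (by simpa using h₂)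

theorem cycLE_append_left (h : CycLE x y) (h' : CycLE x' y) : CycLE (x ++ x') y := by
  have h₁ : LSLe (x ++ (x' ++ y)) (x ++ (y ++ x')) := lsle_append rfl (lsle_refl _) h'
  have h₂ : LSLe (x ++ y ++ x') (y ++ x ++ x') :=
    lsle_append (by simp [Nat.add_comm]) h (lsle_refl _)
  simpa [CycLE] using lsle_trans h₁ (by simpa using h₂)

theorem cycLT_append_left (h : CycLT x y) (h' : CycLE x' y) : CycLT (x ++ x') y := by
  have h₁ : LSLe (x ++ (x' ++ y)) (x ++ (y ++ x')) := lsle_append rfl (lsle_refl _) h'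
  have h₂ : LSLt (x ++ y ++ x') (y ++ x ++ x') :=
    lslt_append_of_length_eq (by simp [Nat.add_comm]) h _ _
  simpa [CycLT] using lslt_of_lsle_of_lslt h₁ (by simpa using h₂)

theorem CycLE.pow_left (h : CycLE x y) (m : ℕ) : CycLE (replicate m x).flatten y := by
  induction m with
  | zero => exact cycLE_nil_left y
  | succ m ih => simpa [replicate_succ] using cycLE_append_left h ih

theorem CycLE.pow (h : CycLE x y) (m n : ℕ) :
    CycLE (replicate m x).flatten (replicate n y).flatten := by
  induction n with
  | zero => exact cycLE_nil_right _
  | succ n ih => simpa [replicate_succ] using cycLE_append_right (h.pow_left m) ih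

theorem CycLT.pow (h : CycLT x y) {m n : ℕ} (hm : 0 < m) (hn : 0 < n) :
    CycLT (replicate m x).flatten (replicate n y).flatten := by
  obtain ⟨m, rfl⟩ := Nat.exists_eq_add_of_lt hm
  obtain ⟨n, rfl⟩ := Nat.exists_eq_add_of_lt hn
  have hl : CycLT (replicate (m + 1) x).flatten y := by
    simpa [replicate_succ] using cycLT_append_left h (h.cycLE.pow_left m)
  simpa [replicate_succ] using cycLT_append_right hl (h.cycLE.pow (m + 1) n)

theorem cycLT_or_cycLE (x y : List X) : CycLT x y ∨ CycLE y x := by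
  rcases lslt_trichotomy_of_length_eq (u := x ++ y) (v := y ++ x) (by simp [Nat.add_comm])
    with h | h | h
  exacts [Or.inl h, Or.inr (Or.inl h.symm), Or.inr h.lsle]

theorem CycLE.lsle_of_length_eq (h : CycLE p q) (hl : p.length = q.length) : LSLe p q :=
  lsle_of_lsle_append hl h

theorem CycLT.lslt_of_length_eq (h : CycLT p q) (hl : p.length = q.length) : LSLt p q := by
  rcases h.cycLE.lsle_of_length_eq hl with rfl | h'
  exacts [absurd h (lslt_irrefl _), h']

theorem CycLE.trans_cycLT (hx : x ≠ []) (hy : y ≠ []) (hz : z ≠ []) (hxy : CycLE x y)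
    (hyz : CycLT y z) : CycLT x z := by
  refine (cycLT_or_cycLE x z).resolve_right fun hzx => lslt_irrefl
    (replicate (x.length * y.length) z).flatten ?_
  have := length_pos_iff.2 hx
  have := length_pos_iff.2 hy
  have := length_pos_iff.2 hz
  have hlen (n : ℕ) (w : List X) : (replicate n w).flatten.length = n * w.length := by simp
  have hzx' := (hzx.pow (x.length * y.length) (y.length * z.length)).lsle_of_length_eq
    (by simp only [hlen]; ring)
  have hxy' := (hxy.pow (y.length * z.length) (x.length * z.length)).lsle_of_length_eq
    (by simp only [hlen]; ring)
  have hyz' := (hyz.pow (m := x.length * z.length) (n := x.length * y.length) (by positivity)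
    (by positivity)).lslt_of_length_eq (by simp only [hlen]; ring)
  exact lslt_of_lsle_of_lslt (lsle_trans hzx' hxy') hyz'

theorem cycLE_flatten {l : List (List X)} (h : ∀ y ∈ l, CycLE x y) : CycLE x l.flatten := by
  induction l with
  | nil => exact cycLE_nil_right x
  | cons y l ih => exact cycLE_append_right (h y (by simp)) (ih fun z hz => h z (by simp [hz]))

instance : Trans (α := List X) LSLe LSLe LSLe := ⟨lsle_trans⟩

theorem cycLE_of_lsle (hx : IsALSW x) (hy : y ≠ []) (h : LSLe x y) : CycLE x y := by
  rcases h with rfl | h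
  · exact lsle_refl _
  rcases lslt_cases h with ⟨t, ht, rfl⟩ | h
  · simpa [CycLE] using ((lslt_append_left_iff y).2 (hx.cycLT hy ht)).lsle
  · exact (h y x).lsle

theorem cycLT_of_lyndon_factor {cs l₁ l₂ : List (List X)} (hvc : IsALSW (v ++ cs.flatten))
    (hv : v ≠ []) (hcs : ∀ w ∈ cs, IsALSW w) (hchain : cs.IsChain LSLe)
    (hsplit : cs = l₁ ++ x :: l₂) : CycLT x (v ++ l₁.flatten) := by
  subst hsplit
  have hx : IsALSW x := hcs x (by simp)
  have hS : CycLE x (x :: l₂).flatten := by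
    refine cycLE_flatten fun y hy => cycLE_of_lsle hx (hcs y (by simp_all)).1 ?_
    rcases mem_cons.1 hy with rfl | hy
    · exact lsle_refl _
    · exact (pairwise_cons.1 ((isChain_iff_pairwise.1 hchain).sublist
        (sublist_append_right _ _))).1 y hy
  have hSP : CycLT (x :: l₂).flatten (v ++ l₁.flatten) :=
    IsALSW.cycLT (by simpa using hvc) (by simp [hv]) (by simp [hx.1])
  exact hS.trans_cycLT hx.1 (by simp [hx.1]) (by simp [hv]) hSP

end CyclicOrder

section Bracketings

variable {X : Type*} {u : List X} {s t t₁ t₂ : FreeMagma X}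

@[simp] theorem wordOf_mul : wordOf (t₁ * t₂) = wordOf t₁ ++ wordOf t₂ := rfl

@[simp] theorem leftComb_cons (t₀ t : FreeMagma X) (ts : List (FreeMagma X)) :
    leftComb t₀ (t :: ts) = leftComb (t₀ * t) ts := rfl

theorem ReplaceAt.wordOf_eq {s' t' : FreeMagma X} {a d : List X}
    (h : ReplaceAt s s' a d t t') : wordOf t = a ++ wordOf s ++ d := by
  induction h with
  | refl => simp
  | left _ _ ih | right _ _ ih => simp [ih]

variable [LinearOrder X]

theorem IsStdBracketing.wordOf_eq (h : IsStdBracketing u t) : wordOf t = u := by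
  induction h with
  | of x => rfl
  | mul _ _ _ _ ih₁ ih₂ => rw [wordOf_mul, ih₁, ih₂]

theorem IsStdBracketing.isALSW (h : IsStdBracketing u t) : IsALSW u := by
  cases h with
  | of x =>
    refine ⟨by simp, fun v w hv hw hvw => absurd (congrArg length hvw) ?_⟩
    have := length_pos_iff.2 hv
    have := length_pos_iff.2 hw
    simp only [length_append, length_singleton]
    omega
  | mul h _ _ _ => exact h

theorem IsStdBracketing.of_mul (h : IsStdBracketing u (t₁ * t₂)) :
    IsStdBracketing (wordOf t₁) t₁ ∧ IsStdBracketing (wordOf t₂) t₂ ∧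
      CycLT (wordOf t₂) (wordOf t₁) := by
  cases h with
  | mul halsw _ h₁ h₂ =>
    rw [h₁.wordOf_eq, h₂.wordOf_eq]
    exact ⟨h₁, h₂, halsw.cycLT h₁.isALSW.1 h₂.isALSW.1⟩

theorem SubtreeAt.isStdBracketing {a d : List X} (hs : SubtreeAt s a d t)
    (ht : IsStdBracketing (wordOf t) t) : IsStdBracketing (wordOf s) s := by
  induction hs with
  | refl => exact ht
  | left _ _ ih => exact ih ht.of_mul.1
  | right _ _ ih => exact ih ht.of_mul.2.1

end Bracketings

open Submodule Set Pointwise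

theorem mul_mem_span_of_forall_mul_mem {R A : Type*} [CommSemiring R] [Semiring A] [Algebra R A]
    {s t r : Set A} (h : ∀ x ∈ s, ∀ y ∈ t, x * y ∈ r) {f g : A} (hf : f ∈ span R s)
    (hg : g ∈ span R t) : f * g ∈ span R r := by
  have hst : s * t ⊆ r := by
    rintro _ ⟨x, hx, y, hy, rfl⟩
    exact h x hx y hy
  exact span_mono hst (span_mul_span R s t ▸ mul_mem_mul hf hg)

section MonomialSpans

variable {k X : Type*} [Field k] {S S' : Set (List X)} {T f g : FreeAssocAlg k X}
  {u v w : List X}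

theorem monom_mul_monom (u w : List X) : monom k u * monom k w = monom k (u ++ w) := by
  simp [monom, MonoidAlgebra.single_mul_single]

theorem coeffW_add (f g : FreeAssocAlg k X) (w : List X) :
    coeffW (f + g) w = coeffW f w + coeffW g w := rfl

theorem coeffW_smul (α : k) (f : FreeAssocAlg k X) (w : List X) :
    coeffW (α • f) w = α * coeffW f w := rfl

theorem coeffW_monom_self (u : List X) : coeffW (monom k u) u = 1 := by
  simp [coeffW, monom, MonoidAlgebra.coeff_single]

theorem coeffW_monom_of_ne (h : w ≠ u) : coeffW (monom k u) w = 0 := by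
  simp [coeffW, monom, MonoidAlgebra.coeff_single, Ne.symm h]

@[simp] theorem evalC_mul (t₁ t₂ : FreeMagma X) :
    evalC (k := k) (t₁ * t₂) = evalC t₁ * evalC t₂ - evalC t₂ * evalC t₁ := rfl

variable (k) in
noncomputable def monomSpan (S : Set (List X)) : Submodule k (FreeAssocAlg k X) :=
  span k (monom k '' S)

noncomputable def sandwichSpan (T : FreeAssocAlg k X) (v : List X) (S : Set (List X)) :
    Submodule k (FreeAssocAlg k X) :=
  span k {g | ∃ a b, a ++ v ++ b ∈ S ∧ monom k a * T * monom k b = g}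

theorem monom_mem_monomSpan (hu : u ∈ S) : monom k u ∈ monomSpan k S :=
  subset_span ⟨u, hu, rfl⟩

theorem monomSpan_mono (h : S ⊆ S') : monomSpan k S ≤ monomSpan k S' :=
  span_mono (image_mono h)

theorem mul_mem_monomSpan (hf : f ∈ monomSpan k S) (hg : g ∈ monomSpan k S') :
    f * g ∈ monomSpan k (image2 (· ++ ·) S S') := by
  refine mul_mem_span_of_forall_mul_mem ?_ hf hg
  rintro _ ⟨u, hu, rfl⟩ _ ⟨w, hw, rfl⟩
  exact ⟨u ++ w, mem_image2_of_mem hu hw, (monom_mul_monom u w).symm⟩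

theorem coeffW_eq_zero_of_mem_monomSpan (hf : f ∈ monomSpan k S) (hw : w ∉ S) :
    coeffW f w = 0 := by
  induction hf using span_induction with
  | mem _ hg =>
    obtain ⟨u, hu, rfl⟩ := hg
    exact coeffW_monom_of_ne (ne_of_mem_of_not_mem hu hw).symm
  | zero => rfl
  | add f g _ _ hf hg => rw [coeffW_add, hf, hg, add_zero]
  | smul α f _ hf => rw [coeffW_smul, hf, mul_zero]

theorem monom_mul_mul_monom_mem_sandwichSpan {a b : List X} (h : a ++ v ++ b ∈ S) :
    monom k a * T * monom k b ∈ sandwichSpan T v S :=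
  subset_span ⟨a, b, h, rfl⟩

theorem sandwichSpan_mono (h : S ⊆ S') : sandwichSpan T v S ≤ sandwichSpan T v S' :=
  span_mono fun _ ⟨a, b, hab, hg⟩ => ⟨a, b, h hab, hg⟩

theorem mul_mem_sandwichSpan_left (hf : f ∈ monomSpan k S)
    (hg : g ∈ sandwichSpan T v S') : f * g ∈ sandwichSpan T v (image2 (· ++ ·) S S') := by
  refine mul_mem_span_of_forall_mul_mem ?_ hf hg
  rintro _ ⟨e, he, rfl⟩ _ ⟨a, b, hab, rfl⟩
  refine ⟨e ++ a, b, ⟨e, he, _, hab, by simp⟩, ?_⟩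
  simp only [← monom_mul_monom, mul_assoc]

theorem mul_mem_sandwichSpan_right (hg : g ∈ sandwichSpan T v S)
    (hf : f ∈ monomSpan k S') : g * f ∈ sandwichSpan T v (image2 (· ++ ·) S S') := by
  refine mul_mem_span_of_forall_mul_mem ?_ hg hf
  rintro _ ⟨a, b, hab, rfl⟩ _ ⟨e, he, rfl⟩
  refine ⟨a, b ++ e, ⟨_, hab, e, he, by simp⟩, ?_⟩
  simp only [← monom_mul_monom, mul_assoc]

end MonomialSpans

section LowerWords

variable {X : Type*} [LinearOrder X] {u u' p q : List X}

/-- Restricting to words of the length of `u` is what makes these sets stable under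
concatenation. -/
def lowerWords (u : List X) : Set (List X) := {w | w.length = u.length ∧ LSLe w u}

def strictLowerWords (u : List X) : Set (List X) := {w | w.length = u.length ∧ LSLt w u}

theorem self_mem_lowerWords (u : List X) : u ∈ lowerWords u := ⟨rfl, lsle_refl u⟩

theorem self_notMem_strictLowerWords (u : List X) : u ∉ strictLowerWords u :=
  fun h => lslt_irrefl u h.2

theorem strictLowerWords_subset_lowerWords : strictLowerWords u ⊆ lowerWords u :=
  fun _ h => ⟨h.1, h.2.lsle⟩

theorem lowerWords_subset_strictLowerWords (hl : u.length = u'.length) (h : LSLt u u') :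
    lowerWords u ⊆ strictLowerWords u' :=
  fun _ hw => ⟨hw.1.trans hl, lslt_of_lsle_of_lslt hw.2 h⟩

theorem image2_append_lowerWords :
    image2 (· ++ ·) (lowerWords p) (lowerWords q) ⊆ lowerWords (p ++ q) := by
  rintro _ ⟨w, hw, w', hw', rfl⟩
  exact ⟨by simp [hw.1, hw'.1], lsle_append hw.1 hw.2 hw'.2⟩

theorem image2_append_strictLowerWords_lowerWords :
    image2 (· ++ ·) (strictLowerWords p) (lowerWords q) ⊆ strictLowerWords (p ++ q) := by
  rintro _ ⟨w, hw, w', hw', rfl⟩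
  exact ⟨by simp [hw.1, hw'.1], lslt_append_of_length_eq hw.1 hw.2 _ _⟩

theorem image2_append_lowerWords_strictLowerWords :
    image2 (· ++ ·) (lowerWords p) (strictLowerWords q) ⊆ strictLowerWords (p ++ q) := by
  rintro _ ⟨w, hw, w', hw', rfl⟩
  exact ⟨by simp [hw.1, hw'.1], lslt_append_of_lsle_of_lslt hw.1 hw.2 hw'.2⟩

theorem image2_append_lowerWords_of_cycLT (h : CycLT q p) :
    image2 (· ++ ·) (lowerWords q) (lowerWords p) ⊆ strictLowerWords (p ++ q) :=
  image2_append_lowerWords.trans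
    (lowerWords_subset_strictLowerWords (by simp [Nat.add_comm]) h)

end LowerWords

section LeadingTerms

variable {k X : Type*} [Field k] [LinearOrder X] {u : List X} {t : FreeMagma X}
  {A : FreeAssocAlg k X}

theorem mem_monomSpan_lowerWords (h : A - monom k u ∈ monomSpan k (strictLowerWords u)) :
    A ∈ monomSpan k (lowerWords u) := by
  rw [← sub_add_cancel A (monom k u)]
  exact add_mem (monomSpan_mono strictLowerWords_subset_lowerWords h)
    (monom_mem_monomSpan (self_mem_lowerWords u))

theorem isLeadingWord_of_sub_monom_mem (h : A - monom k u ∈ monomSpan k (strictLowerWords u)) :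
    IsLeadingWord A u := by
  have hA : ∀ w, coeffW A w = coeffW (A - monom k u) w + coeffW (monom k u) w := fun w => by
    rw [← coeffW_add, sub_add_cancel]
  refine ⟨?_, fun w hw => or_iff_not_imp_left.2 fun hwu => Or.inr ?_⟩
  · rw [hA, coeffW_eq_zero_of_mem_monomSpan h (self_notMem_strictLowerWords u),
      coeffW_monom_self, zero_add]
    exact one_ne_zero
  · rw [hA, coeffW_monom_of_ne hwu, add_zero] at hw
    by_contra hw'
    exact hw (coeffW_eq_zero_of_mem_monomSpan h hw')

theorem IsStdBracketing.evalC_sub_monom_mem (h : IsStdBracketing u t) :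
    evalC t - monom k u ∈ monomSpan k (strictLowerWords u) := by
  induction h with
  | of x => simp [evalC, gen]
  | @mul v w tv tw halsw _ hv hw ihv ihw =>
    have hswap : CycLT w v := halsw.cycLT hv.isALSW.1 hw.isALSW.1
    have key : evalC (k := k) tv * evalC tw - evalC tw * evalC tv - monom k (v ++ w) =
        (evalC tv - monom k v) * evalC tw + monom k v * (evalC tw - monom k w) -
          evalC tw * evalC tv := by
      rw [← monom_mul_monom]; noncomm_ring
    rw [evalC_mul, key]
    refine sub_mem (add_mem ?_ ?_) ?_
    · exact monomSpan_mono image2_append_strictLowerWords_lowerWords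
        (mul_mem_monomSpan ihv (mem_monomSpan_lowerWords ihw))
    · exact monomSpan_mono image2_append_lowerWords_strictLowerWords
        (mul_mem_monomSpan (monom_mem_monomSpan (self_mem_lowerWords v)) ihw)
    · exact monomSpan_mono (image2_append_lowerWords_of_cycLT hswap)
        (mul_mem_monomSpan (mem_monomSpan_lowerWords ihw) (mem_monomSpan_lowerWords ihv))

end LeadingTerms

section SpecialForm

variable {k X : Type*} [Field k] [LinearOrder X] {T A B : FreeAssocAlg k X}
  {v a b w : List X}

/-- For `T = [v]`, the shape `a[v]b + Σ αᵢ aᵢ[v]bᵢ` with all `aᵢvbᵢ < avb` claimed for `[u]_v`. -/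
def HasSpecialForm (T : FreeAssocAlg k X) (v a b : List X) (A : FreeAssocAlg k X) : Prop :=
  A - monom k a * T * monom k b ∈ sandwichSpan T v (strictLowerWords (a ++ v ++ b))

theorem hasSpecialForm_self : HasSpecialForm T v [] [] T := by
  simp [HasSpecialForm, show monom k ([] : List X) = 1 from rfl]

theorem HasSpecialForm.mem_sandwichSpan (h : HasSpecialForm T v a b A) :
    A ∈ sandwichSpan T v (lowerWords (a ++ v ++ b)) := by
  rw [← sub_add_cancel A (monom k a * T * monom k b)]
  exact add_mem (sandwichSpan_mono strictLowerWords_subset_lowerWords h)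
    (monom_mul_mul_monom_mem_sandwichSpan (self_mem_lowerWords _))

theorem HasSpecialForm.commutator_right (hA : HasSpecialForm T v a b A)
    (hB : B - monom k w ∈ monomSpan k (strictLowerWords w)) (hw : CycLT w (a ++ v ++ b)) :
    HasSpecialForm T v a (b ++ w) (A * B - B * A) := by
  have key : A * B - B * A - monom k a * T * monom k (b ++ w) =
      (A - monom k a * T * monom k b) * B + monom k a * T * monom k b * (B - monom k w) -
        B * A := by
    rw [← monom_mul_monom]; noncomm_ring
  rw [HasSpecialForm, key, show a ++ v ++ (b ++ w) = a ++ v ++ b ++ w by simp]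
  refine sub_mem (add_mem ?_ ?_) ?_
  · exact sandwichSpan_mono image2_append_strictLowerWords_lowerWords
      (mul_mem_sandwichSpan_right hA (mem_monomSpan_lowerWords hB))
  · exact sandwichSpan_mono image2_append_lowerWords_strictLowerWords
      (mul_mem_sandwichSpan_right
        (monom_mul_mul_monom_mem_sandwichSpan (self_mem_lowerWords _)) hB)
  · exact sandwichSpan_mono (image2_append_lowerWords_of_cycLT hw)
      (mul_mem_sandwichSpan_left (mem_monomSpan_lowerWords hB) hA.mem_sandwichSpan)

theorem HasSpecialForm.commutator_left (hA : HasSpecialForm T v a b A)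
    (hB : B - monom k w ∈ monomSpan k (strictLowerWords w)) (hw : CycLT (a ++ v ++ b) w) :
    HasSpecialForm T v (w ++ a) b (B * A - A * B) := by
  have key : B * A - A * B - monom k (w ++ a) * T * monom k b =
      (B - monom k w) * A + monom k w * (A - monom k a * T * monom k b) - A * B := by
    rw [← monom_mul_monom]; noncomm_ring
  rw [HasSpecialForm, key, show w ++ a ++ v ++ b = w ++ (a ++ v ++ b) by simp]
  refine sub_mem (add_mem ?_ ?_) ?_
  · exact sandwichSpan_mono image2_append_strictLowerWords_lowerWords
      (mul_mem_sandwichSpan_left hB hA.mem_sandwichSpan)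
  · exact sandwichSpan_mono image2_append_lowerWords_strictLowerWords
      (mul_mem_sandwichSpan_left (monom_mem_monomSpan (self_mem_lowerWords w)) hA)
  · exact sandwichSpan_mono (image2_append_lowerWords_of_cycLT hw)
      (mul_mem_sandwichSpan_right hA.mem_sandwichSpan
        (mem_monomSpan_lowerWords hB))

theorem sandwichSpan_strictLowerWords_le (hT : T ∈ monomSpan k (lowerWords v)) (U : List X) :
    sandwichSpan T v (strictLowerWords U) ≤ monomSpan k (strictLowerWords U) := by
  refine span_le.2 ?_
  rintro _ ⟨a, b, hab, rfl⟩
  have hmem := mul_mem_monomSpan (mul_mem_monomSpan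
    (monom_mem_monomSpan (self_mem_lowerWords a)) hT) (monom_mem_monomSpan (self_mem_lowerWords b))
  refine monomSpan_mono ?_ hmem
  refine ((image2_subset_right image2_append_lowerWords).trans image2_append_lowerWords).trans ?_
  exact lowerWords_subset_strictLowerWords hab.1 hab.2

theorem HasSpecialForm.isLeadingWord (hT : T - monom k v ∈ monomSpan k (strictLowerWords v))
    (h : HasSpecialForm T v a b A) : IsLeadingWord A (a ++ v ++ b) := by
  refine isLeadingWord_of_sub_monom_mem ?_
  have key : A - monom k (a ++ v ++ b) = (A - monom k a * T * monom k b) +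
      monom k a * (T - monom k v) * monom k b := by
    rw [← monom_mul_monom, ← monom_mul_monom]; noncomm_ring
  rw [key]
  refine add_mem (sandwichSpan_strictLowerWords_le (mem_monomSpan_lowerWords hT) _ h) ?_
  refine monomSpan_mono ?_ (mul_mem_monomSpan (mul_mem_monomSpan
    (monom_mem_monomSpan (self_mem_lowerWords a)) hT) (monom_mem_monomSpan (self_mem_lowerWords b)))
  exact (image2_subset_right image2_append_lowerWords_strictLowerWords).trans
    image2_append_strictLowerWords_lowerWords

theorem HasSpecialForm.exists_sum (h : HasSpecialForm T v a b A) :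
    ∃ (n : ℕ) (α : Fin n → k) (aa bb : Fin n → List X),
      A = monom k a * T * monom k b + ∑ i, α i • (monom k (aa i) * T * monom k (bb i)) ∧
        ∀ i, DegLt (aa i ++ v ++ bb i) (a ++ v ++ b) := by
  obtain ⟨n, α, g, hg⟩ := mem_span_set'.1 h
  choose aa bb hab hgab using fun i => (g i).2
  refine ⟨n, α, aa, bb, ?_, fun i => Or.inr (hab i)⟩
  simp only [hgab, hg, add_sub_cancel]

end SpecialForm

section SpecialBracketing

variable {k X : Type*} [Field k] [LinearOrder X] {v c : List X} {tv s : FreeMagma X}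

theorem hasSpecialForm_leftComb {cs : List (List X)} {tcs : List (FreeMagma X)}
    (htcs : Forall₂ IsStdBracketing cs tcs) {t₀ : FreeMagma X}
    (h₀ : HasSpecialForm (evalC (k := k) tv) v [] c (evalC t₀))
    (hcyc : ∀ l₁ x l₂, cs = l₁ ++ x :: l₂ → CycLT x (v ++ c ++ l₁.flatten)) :
    HasSpecialForm (evalC (k := k) tv) v [] (c ++ cs.flatten) (evalC (leftComb t₀ tcs)) := by
  induction htcs generalizing c t₀ with
  | nil => simpa [leftComb] using h₀
  | @cons x tx cs tcs hx _ ih =>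
    have h₁ := h₀.commutator_right hx.evalC_sub_monom_mem (by simpa using hcyc [] x cs rfl)
    simpa using ih (t₀ := t₀ * tx) h₁ fun l₁ y l₂ hsplit => by
      simpa using hcyc (x :: l₁) y l₂ (by simp [hsplit])

theorem hasSpecialForm_of_replaceAt {s' : FreeMagma X} (hws : wordOf s = v ++ c)
    (hs' : HasSpecialForm (evalC (k := k) tv) v [] c (evalC s')) {a d : List X}
    {t t' : FreeMagma X} (hrep : ReplaceAt s s' a d t t') (ht : IsStdBracketing (wordOf t) t) :
    HasSpecialForm (evalC (k := k) tv) v a (c ++ d) (evalC t') := by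
  induction hrep with
  | refl => simpa using hs'
  | @left a d t₁ t₁' t₂ hrep ih =>
    obtain ⟨ht₁, ht₂, hswap⟩ := ht.of_mul
    rw [hrep.wordOf_eq, hws] at hswap
    simpa using (ih ht₁).commutator_right ht₂.evalC_sub_monom_mem (by simpa using hswap)
  | @right a d t₂ t₂' t₁ hrep ih =>
    obtain ⟨ht₁, ht₂, hswap⟩ := ht.of_mul
    rw [hrep.wordOf_eq, hws] at hswap
    simpa using (ih ht₂).commutator_left ht₁.evalC_sub_monom_mem (by simpa using hswap)

end SpecialBracketing

theorem shirshov_special_bracketing_ii_general {k X : Type*} [Field k] [LinearOrder X]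
    (a v b c d : List X) (t s tv t' : FreeMagma X)
    (cs : List (List X)) (tcs : List (FreeMagma X))
    (hb : b = c ++ d)
    (ht : IsStdBracketing (a ++ v ++ b) t)
    (hs : SubtreeAt s a d t) (hws : wordOf s = v ++ c)
    (htv : IsStdBracketing v tv) (hcs : LyndonFactorization c cs)
    (htcs : List.Forall₂ IsStdBracketing cs tcs)
    (hrep : ReplaceAt s (leftComb tv tcs) a d t t') :
    IsLeadingWord (evalC (k := k) t') (a ++ v ++ b) ∧
      ∃ (n : ℕ) (α : Fin n → k) (aa bb : Fin n → List X),
        evalC (k := k) t' =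
            monom k a * evalC tv * monom k b +
              ∑ i, α i • (monom k (aa i) * evalC (k := k) tv * monom k (bb i)) ∧
          ∀ i, DegLt (aa i ++ v ++ bb i) (a ++ v ++ b) := by
  obtain ⟨rfl, hfactors, hchain⟩ := hcs
  subst hb
  have ht' : IsStdBracketing (wordOf t) t := by rwa [ht.wordOf_eq]
  have hvc : IsALSW (v ++ cs.flatten) := hws ▸ (hs.isStdBracketing ht').isALSW
  have hbase : HasSpecialForm (evalC (k := k) tv) v [] cs.flatten (evalC (leftComb tv tcs)) := by
    simpa using hasSpecialForm_leftComb htcs hasSpecialForm_self fun l₁ x l₂ hsplit => by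
      simpa using cycLT_of_lyndon_factor hvc htv.isALSW.1 hfactors hchain hsplit
  have hu := hasSpecialForm_of_replaceAt hws hbase hrep ht'
  exact ⟨hu.isLeadingWord htv.evalC_sub_monom_mem, hu.exists_sum⟩

/-- Shirshov's special bracketing lemma, part (ii).
Let `u = avb` be an ALSW with ALSW subword `v`, and let `[u]_v` be the relative
bracketing obtained from `[u] = [a[vc]d]` by replacing `[vc]` with
`[[[v][c₁]]⋯[c_k]]`, where `c = c₁⋯c_k` is the non-decreasing Lyndon
factorization of `c`.  Then in `k⟨X⟩` the leading word of `[u]_v` is `u`, and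
`[u]_v = a[v]b + Σᵢ αᵢ aᵢ[v]bᵢ` with each `aᵢvbᵢ < avb` in deg-lex order. -/
theorem shirshov_special_bracketing_ii {k X : Type*} [Field k] [LinearOrder X]
    (a v b c d : List X) (t s tv t' : FreeMagma X)
    (cs : List (List X)) (tcs : List (FreeMagma X))
    (hu : IsALSW (a ++ v ++ b)) (hv : IsALSW v) (hb : b = c ++ d)
    (ht : IsStdBracketing (a ++ v ++ b) t)
    (hs : SubtreeAt s a d t) (hws : wordOf s = v ++ c)
    (htv : IsStdBracketing v tv) (hcs : LyndonFactorization c cs)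
    (htcs : List.Forall₂ IsStdBracketing cs tcs)
    (hrep : ReplaceAt s (leftComb tv tcs) a d t t') :
    IsLeadingWord (evalC (k := k) t') (a ++ v ++ b) ∧
      ∃ (n : ℕ) (α : Fin n → k) (aa bb : Fin n → List X),
        evalC (k := k) t' =
            monom k a * evalC tv * monom k b +
              ∑ i, α i • (monom k (aa i) * evalC (k := k) tv * monom k (bb i)) ∧
          ∀ i, DegLt (aa i ++ v ++ bb i) (a ++ v ++ b) :=
  shirshov_special_bracketing_ii_general a v b c d t s tv t' cs tcs hb ht hs hws htv hcs htcs hrep
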